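/- Let ε ∈ ℝ, γ > 0, L ∈ ℝ, T > 0, λ ∈ (0,1) and c_U > 0. Let v, w, φ : [0,T] → ℝ be differentiable and h : [0,T] → ℝ with w ≥ 0, φ ≥ 0 on [0,T], satisfying (i) v'(t) ≤ −ε v(t) − h(t)² + γ² w(t)², (ii) (w²)'(t) ≤ 2L w(t)² + 2 h(t) w(t), and (iii) φ'(t) = −2(L + ε/2) φ(t) − γ (φ(t)² + 1) on [0,T]. Assume moreover γ φ(T) ≥ λ² c_U and let w⁺ ≥ 0 satisfy w⁺ ≤ λ w(T). Then v(T) + c_U (w⁺)² ≤ e^{−εT} (v(0) + γ φ(0) w(0)²). (This is the trajectory-wise form of the post-jump estimate (13) in Proposition 2.1, using condition (11a) that γ₀φ₀(τ) ≥ λ²c_U on [0, T_max] and the jump bound W̃(1,e,−e) ≤ λ W̃(0,e,s).) -/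

import Mathlib

/-!
The Lyapunov function `V = v + γ φ w²` satisfies `V' ≤ -ε V` along the flow: inserting (i), (ii)
and the Riccati equation (iii) for `φ`, the terms in `L` cancel and what remains of `V' + ε V` is
`-(h - γ φ w)²`. Grönwall then gives `V(T) ≤ e^{-εT} V(0)`, and the transition condition
`γ φ(T) ≥ λ² c_U` together with the jump bound `w⁺ ≤ λ w(T)` shows that the jump term `c_U (w⁺)²`
is dominated by the part `γ φ(T) w(T)²` of `V(T)`.
-/

open Set

theorem le_exp_mul_of_hasDerivAt_le_mul {f f' : ℝ → ℝ} {K a b : ℝ}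
    (hf : ∀ t ∈ Icc a b, HasDerivAt f (f' t) t) (bound : ∀ t ∈ Ico a b, f' t ≤ K * f t) :
    ∀ t ∈ Icc a b, f t ≤ f a * Real.exp (K * (t - a)) := by
  intro t ht
  rw [← gronwallBound_ε0]
  refine le_gronwallBound_of_liminf_deriv_right_le (f' := f')
    (fun s hs => (hf s hs).continuousAt.continuousWithinAt)
    (fun s hs _ hr => (hf s (Ico_subset_Icc_self hs)).hasDerivWithinAt.liminf_right_slope_le hr)
    le_rfl (fun s hs => by simpa using bound s hs) t ht

theorem lyapunov_deriv_le {ε γ L v w φ h v' w' φ' : ℝ} (hγφ : 0 ≤ γ * φ)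
    (hi : v' ≤ -ε * v - h ^ 2 + γ ^ 2 * w ^ 2)
    (hii : 2 * w * w' ≤ 2 * L * w ^ 2 + 2 * h * w)
    (hiii : φ' = -2 * (L + ε / 2) * φ - γ * (φ ^ 2 + 1)) :
    v' + γ * (φ' * w ^ 2 + φ * (2 * w * w')) ≤ -ε * (v + γ * φ * w ^ 2) := by
  have hmul := mul_le_mul_of_nonneg_left hii hγφ
  subst hiii
  nlinarith [sq_nonneg (h - γ * φ * w)]

theorem jump_term_le {lam cU γ φT wT wplus : ℝ} (hcU : 0 ≤ cU) (htrans : lam ^ 2 * cU ≤ γ * φT)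
    (hwplus0 : 0 ≤ wplus) (hwplus : wplus ≤ lam * wT) :
    cU * wplus ^ 2 ≤ γ * φT * wT ^ 2 :=
  calc cU * wplus ^ 2 ≤ cU * (lam * wT) ^ 2 := by gcongr
    _ = lam ^ 2 * cU * wT ^ 2 := by ring
    _ ≤ γ * φT * wT ^ 2 := by gcongr

theorem stmt_10_general (ε γ L T lam cU : ℝ) (hγ : 0 < γ) (hT : 0 < T)
    (hcU : 0 < cU)
    (v w φ h v' w' φ' : ℝ → ℝ)
    (hvd : ∀ t ∈ Set.Icc 0 T, HasDerivAt v (v' t) t)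
    (hwd : ∀ t ∈ Set.Icc 0 T, HasDerivAt w (w' t) t)
    (hφd : ∀ t ∈ Set.Icc 0 T, HasDerivAt φ (φ' t) t)
    (hφ0 : ∀ t ∈ Set.Icc 0 T, 0 ≤ φ t)
    (hi : ∀ t ∈ Set.Icc 0 T, v' t ≤ -ε * v t - (h t) ^ 2 + γ ^ 2 * (w t) ^ 2)
    (hii : ∀ t ∈ Set.Icc 0 T, 2 * w t * w' t ≤ 2 * L * (w t) ^ 2 + 2 * h t * w t)
    (hiii : ∀ t ∈ Set.Icc 0 T, φ' t = -2 * (L + ε / 2) * φ t - γ * ((φ t) ^ 2 + 1))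
    (htrans : lam ^ 2 * cU ≤ γ * φ T)
    (wplus : ℝ) (hwplus0 : 0 ≤ wplus) (hwplus : wplus ≤ lam * w T) :
    v T + cU * wplus ^ 2 ≤ Real.exp (-ε * T) * (v 0 + γ * φ 0 * (w 0) ^ 2) := by
  have hVd : ∀ t ∈ Icc 0 T, HasDerivAt (fun t => v t + γ * φ t * w t ^ 2)
      (v' t + γ * (φ' t * w t ^ 2 + φ t * (2 * w t * w' t))) t := fun t ht =>
    ((hvd t ht).fun_add (((hφd t ht).const_mul γ).fun_mul ((hwd t ht).fun_pow 2))).congr_deriv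
      (by norm_num; ring)
  have hdecay := le_exp_mul_of_hasDerivAt_le_mul hVd (fun t ht =>
    have ht' := Ico_subset_Icc_self ht
    lyapunov_deriv_le (mul_nonneg hγ.le (hφ0 t ht')) (hi t ht') (hii t ht') (hiii t ht'))
    T (right_mem_Icc.2 hT.le)
  calc v T + cU * wplus ^ 2 ≤ v T + γ * φ T * w T ^ 2 :=
        add_le_add_right (jump_term_le hcU.le htrans hwplus0 hwplus) _
    _ ≤ Real.exp (-ε * T) * (v 0 + γ * φ 0 * w 0 ^ 2) := by
        simpa only [sub_zero, mul_comm, neg_mul, mul_neg] using hdecay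

/-- Trajectory-wise form of the post-jump estimate (13) in Proposition 2.1: under the
flow conditions (i)–(iii) on `[0,T]`, the transition condition `γφ(T) ≥ λ²c_U`, and the
jump bound `w⁺ ≤ λ w(T)`, one has `v(T) + c_U (w⁺)² ≤ e^{−εT}(v(0) + γφ(0)w(0)²)`. -/
theorem stmt_10 (ε γ L T lam cU : ℝ) (hγ : 0 < γ) (hT : 0 < T)
    (hlam : lam ∈ Set.Ioo (0 : ℝ) 1) (hcU : 0 < cU)
    (v w φ h v' w' φ' : ℝ → ℝ)
    (hvd : ∀ t ∈ Set.Icc 0 T, HasDerivAt v (v' t) t)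
    (hwd : ∀ t ∈ Set.Icc 0 T, HasDerivAt w (w' t) t)
    (hφd : ∀ t ∈ Set.Icc 0 T, HasDerivAt φ (φ' t) t)
    (hw0 : ∀ t ∈ Set.Icc 0 T, 0 ≤ w t)
    (hφ0 : ∀ t ∈ Set.Icc 0 T, 0 ≤ φ t)
    (hi : ∀ t ∈ Set.Icc 0 T, v' t ≤ -ε * v t - (h t) ^ 2 + γ ^ 2 * (w t) ^ 2)
    (hii : ∀ t ∈ Set.Icc 0 T, 2 * w t * w' t ≤ 2 * L * (w t) ^ 2 + 2 * h t * w t)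
    (hiii : ∀ t ∈ Set.Icc 0 T, φ' t = -2 * (L + ε / 2) * φ t - γ * ((φ t) ^ 2 + 1))
    (htrans : lam ^ 2 * cU ≤ γ * φ T)
    (wplus : ℝ) (hwplus0 : 0 ≤ wplus) (hwplus : wplus ≤ lam * w T) :
    v T + cU * wplus ^ 2 ≤ Real.exp (-ε * T) * (v 0 + γ * φ 0 * (w 0) ^ 2) :=
  stmt_10_general ε γ L T lam cU hγ hT hcU v w φ h v' w' φ' hvd hwd hφd hφ0 hi hii hiii htrans wplus
    hwplus0 hwplus
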